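/- If f : [a,b] ⊆ (0,∞) → ℝ is symmetrized p-convex on [a,b] (p ≠ 0) and x ∈ [a,b] with x^p ≠ (a^p + b^p)/2, then f(((a^p + b^p)/2)^(1/p)) ≤ (p/(a^p + b^p - 2x^p)) ∫_x^{(a^p+b^p-x^p)^(1/p)} f(t)·t^(p-1) dt ≤ (1/2)[f(x) + f((a^p + b^p - x^p)^(1/p))]. -/

import Mathlib

noncomputable section
open Real Set MeasureTheory intervalIntegral

/-- `f` is p-convex on `[a,b]`. -/
def PConvexOn (p a b : ℝ) (f : ℝ → ℝ) : Prop :=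
  ∀ x ∈ Set.Icc a b, ∀ y ∈ Set.Icc a b, ∀ t ∈ Set.Icc (0:ℝ) 1,
    f ((t * x ^ p + (1 - t) * y ^ p) ^ (1/p)) ≤ t * f x + (1 - t) * f y

/-- The p-symmetrical transform of `f` on `[a,b]`. -/
def PSym (p a b : ℝ) (f : ℝ → ℝ) : ℝ → ℝ :=
  fun x => (f x + f ((a ^ p + b ^ p - x ^ p) ^ (1/p))) / 2

/-!
With `y = (a ^ p + b ^ p - x ^ p) ^ (1 / p)` and `g s = f (s ^ (1 / p))`, the substitution
`s = t ^ p` turns `p * ∫ t in x..y, f t * t ^ (p - 1)` into `∫ s in x ^ p..y ^ p, g s`, and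
`p`-convexity on `[a, b]` into ordinary convexity on `[[a ^ p, b ^ p]]`. As `x ^ p + y ^ p = a ^ p + b ^ p`, the
symmetrization of `f` becomes `s ↦ (g s + g (x ^ p + y ^ p - s)) / 2`, a convex function with the
same average as `g` over `[[x ^ p, y ^ p]]`; the Hermite–Hadamard inequality for it is the claim.
-/

theorem Set.add_sub_mem_uIcc {α : Type*} [AddCommGroup α] [LinearOrder α] [IsOrderedAddMonoid α]
    {c d s : α} (hs : s ∈ uIcc c d) : c + d - s ∈ uIcc c d := by
  have h := mem_image_of_mem (fun x => c + d - x) hs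
  rwa [image_const_sub_uIcc, add_sub_cancel_left, add_sub_cancel_right, uIcc_comm] at h

theorem intervalIntegral.integral_comp_add_sub (g : ℝ → ℝ) (c d : ℝ) :
    ∫ s in c..d, g (c + d - s) = ∫ s in c..d, g s := by
  simp [integral_comp_sub_left g (c + d)]

section Reflection

variable {g : ℝ → ℝ} {c d : ℝ}

theorem IntervalIntegrable.comp_add_sub (hg : IntervalIntegrable g volume c d) :
    IntervalIntegrable (fun s => g (c + d - s)) volume c d := by
  simpa using (hg.comp_sub_left (c + d)).symm

theorem ConvexOn.map_add_div_two_le (hg : ConvexOn ℝ (uIcc c d) g) {s : ℝ}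
    (hs : s ∈ uIcc c d) :
    g ((c + d) / 2) ≤ (g s + g (c + d - s)) / 2 := by
  have h := hg.2 hs (add_sub_mem_uIcc hs) (by norm_num : (0 : ℝ) ≤ 1 / 2)
    (by norm_num : (0 : ℝ) ≤ 1 / 2) (by norm_num)
  have e : (1 / 2 : ℝ) • s + (1 / 2 : ℝ) • (c + d - s) = (c + d) / 2 := by
    simp only [smul_eq_mul]; ring
  rw [e] at h
  simp only [smul_eq_mul] at h
  linarith

theorem ConvexOn.map_add_map_add_sub_le (hg : ConvexOn ℝ (uIcc c d) g) {s : ℝ}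
    (hs : s ∈ uIcc c d) : g s + g (c + d - s) ≤ g c + g d := by
  rw [← segment_eq_uIcc] at hs
  obtain ⟨μ, ν, hμ, hν, hμν, rfl⟩ := hs
  have h₁ := hg.2 left_mem_uIcc right_mem_uIcc hμ hν hμν
  have h₂ := hg.2 left_mem_uIcc right_mem_uIcc hν hμ (by rw [add_comm, hμν])
  have e : c + d - (μ • c + ν • d) = ν • c + μ • d := by
    simp only [smul_eq_mul]; linear_combination -(c + d) * hμν
  rw [e]
  simp only [smul_eq_mul] at h₁ h₂ ⊢
  linear_combination h₁ + h₂ + (g c + g d) * hμν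

theorem ConvexOn.hermite_hadamard (hg : ConvexOn ℝ (uIcc c d) g)
    (hint : IntervalIntegrable g volume c d) (hcd : c ≠ d) :
    g ((c + d) / 2) ≤ ⨍ s in c..d, g s ∧ ⨍ s in c..d, g s ≤ (g c + g d) / 2 := by
  wlog hlt : c < d generalizing c d
  · have h := this (by rwa [uIcc_comm]) hint.symm hcd.symm (hcd.lt_or_gt.resolve_left hlt)
    rwa [← interval_average_symm, add_comm d, add_comm (g d)] at h
  have hsum : ∫ s in c..d, (g s + g (c + d - s)) = 2 * ∫ s in c..d, g s := by
    rw [integral_add hint hint.comp_add_sub, integral_comp_add_sub, two_mul]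
  have hlower := integral_mono_on (f := fun _ => 2 * g ((c + d) / 2)) hlt.le
    intervalIntegrable_const (hint.add hint.comp_add_sub) fun s hs => by
      linarith [hg.map_add_div_two_le (s := s) (uIcc_of_le hlt.le ▸ hs)]
  have hupper := integral_mono_on (g := fun _ => g c + g d) hlt.le
    (hint.add hint.comp_add_sub) intervalIntegrable_const fun s hs =>
      hg.map_add_map_add_sub_le (uIcc_of_le hlt.le ▸ hs)
  rw [intervalIntegral.integral_const, smul_eq_mul, hsum] at hlower hupper
  rw [interval_average_eq_div, le_div_iff₀ (sub_pos.2 hlt), div_le_iff₀ (sub_pos.2 hlt)]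
  constructor <;> linarith

theorem hermite_hadamard_of_convexOn_symmetrization
    (hg : ConvexOn ℝ (uIcc c d) fun s => (g s + g (c + d - s)) / 2)
    (hint : IntervalIntegrable g volume c d) (hcd : c ≠ d) :
    g ((c + d) / 2) ≤ ⨍ s in c..d, g s ∧ ⨍ s in c..d, g s ≤ (g c + g d) / 2 := by
  have havg : ⨍ s in c..d, (g s + g (c + d - s)) / 2 = ⨍ s in c..d, g s := by
    rw [interval_average_eq_div, interval_average_eq_div, intervalIntegral.integral_div,
      integral_add hint hint.comp_add_sub, integral_comp_add_sub]
    ring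
  have h := hg.hermite_hadamard ((hint.add hint.comp_add_sub).div_const 2) hcd
  rw [havg, show c + d - (c + d) / 2 = (c + d) / 2 by ring, add_sub_cancel_left,
    add_sub_cancel_right, add_comm (g d)] at h
  simpa using h

end Reflection

theorem pos_of_mem_uIcc_of_pos {u v t : ℝ} (hu : 0 < u) (hv : 0 < v) (ht : t ∈ uIcc u v) :
    0 < t :=
  (lt_min hu hv).trans_le ht.1

theorem Real.rpow_mem_uIcc_rpow_iff {p a b x : ℝ} (hp : p ≠ 0) (ha : 0 < a) (hab : a ≤ b)
    (hx : 0 < x) : x ^ p ∈ uIcc (a ^ p) (b ^ p) ↔ x ∈ Icc a b := by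
  have hb := ha.trans_le hab
  rcases hp.lt_or_gt with hneg | hpos
  · rw [uIcc_of_ge (rpow_le_rpow_of_nonpos ha hab hneg.le), mem_Icc, mem_Icc,
      rpow_le_rpow_iff_of_neg hb hx hneg, rpow_le_rpow_iff_of_neg hx ha hneg, and_comm]
  · rw [uIcc_of_le (rpow_le_rpow ha.le hab hpos.le), mem_Icc, mem_Icc,
      rpow_le_rpow_iff ha.le hx.le hpos, rpow_le_rpow_iff hx.le hb.le hpos]

theorem Real.rpow_one_div_mem_Icc {p a b s : ℝ} (hp : p ≠ 0) (ha : 0 < a) (hab : a ≤ b)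
    (hs : s ∈ uIcc (a ^ p) (b ^ p)) : s ^ (1 / p) ∈ Icc a b := by
  have hs0 :=
    pos_of_mem_uIcc_of_pos (rpow_pos_of_pos ha p) (rpow_pos_of_pos (ha.trans_le hab) p) hs
  rwa [← rpow_mem_uIcc_rpow_iff hp ha hab (rpow_pos_of_pos hs0 _), one_div,
    rpow_inv_rpow hs0.le hp]

section RpowSubstitution

variable {p u v : ℝ} (hu : 0 < u) (hv : 0 < v)
include hu hv

theorem continuousOn_rpow_const_uIcc : ContinuousOn (· ^ p) (uIcc u v) :=
  continuousOn_id.rpow_const fun _ ht => Or.inl (pos_of_mem_uIcc_of_pos hu hv ht).ne'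

theorem hasDerivAt_rpow_const_of_mem_Ioo :
    ∀ t ∈ Ioo (min u v) (max u v), HasDerivAt (· ^ p) (p * t ^ (p - 1)) t := fun _ ht =>
  hasDerivAt_rpow_const (Or.inl (pos_of_mem_uIcc_of_pos hu hv (Ioo_subset_Icc_self ht)).ne')

theorem integral_comp_rpow_mul_deriv (hp : p ≠ 0) (g : ℝ → ℝ) :
    ∫ t in u..v, g (t ^ p) * (p * t ^ (p - 1)) = ∫ s in u ^ p..v ^ p, g s := by
  rcases hp.lt_or_gt with hneg | hpos
  · exact integral_comp_mul_deriv_of_deriv_nonpos (continuousOn_rpow_const_uIcc hu hv)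
      (hasDerivAt_rpow_const_of_mem_Ioo hu hv) fun t ht => mul_nonpos_of_nonpos_of_nonneg hneg.le
        (rpow_nonneg (pos_of_mem_uIcc_of_pos hu hv (Ioo_subset_Icc_self ht)).le _)
  · exact integral_comp_mul_deriv_of_deriv_nonneg (continuousOn_rpow_const_uIcc hu hv)
      (hasDerivAt_rpow_const_of_mem_Ioo hu hv) fun t ht => mul_nonneg hpos.le
        (rpow_nonneg (pos_of_mem_uIcc_of_pos hu hv (Ioo_subset_Icc_self ht)).le _)

theorem intervalIntegrable_comp_rpow_mul_deriv_iff (hp : p ≠ 0) (g : ℝ → ℝ) :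
    IntervalIntegrable (fun t => g (t ^ p) * (p * t ^ (p - 1))) volume u v ↔
      IntervalIntegrable g volume (u ^ p) (v ^ p) := by
  rcases hp.lt_or_gt with hneg | hpos
  · exact integrable_comp_mul_deriv_iff_of_deriv_nonpos (continuousOn_rpow_const_uIcc hu hv)
      (hasDerivAt_rpow_const_of_mem_Ioo hu hv) fun t ht => mul_nonpos_of_nonpos_of_nonneg hneg.le
        (rpow_nonneg (pos_of_mem_uIcc_of_pos hu hv (Ioo_subset_Icc_self ht)).le _)
  · exact integrable_comp_mul_deriv_iff_of_deriv_nonneg (continuousOn_rpow_const_uIcc hu hv)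
      (hasDerivAt_rpow_const_of_mem_Ioo hu hv) fun t ht => mul_nonneg hpos.le
        (rpow_nonneg (pos_of_mem_uIcc_of_pos hu hv (Ioo_subset_Icc_self ht)).le _)

theorem eqOn_comp_rpow_one_div_mul_deriv (hp : p ≠ 0) (f : ℝ → ℝ) :
    EqOn (fun t => f ((t ^ p) ^ (1 / p)) * (p * t ^ (p - 1)))
      (fun t => p * (f t * t ^ (p - 1))) (uIcc u v) := fun t ht => by
  simp only [one_div, rpow_rpow_inv (pos_of_mem_uIcc_of_pos hu hv ht).le hp]
  ring

theorem integral_comp_rpow_one_div (hp : p ≠ 0) (f : ℝ → ℝ) :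
    ∫ s in u ^ p..v ^ p, f (s ^ (1 / p)) = p * ∫ t in u..v, f t * t ^ (p - 1) := by
  rw [← integral_comp_rpow_mul_deriv hu hv hp, ← intervalIntegral.integral_const_mul]
  exact integral_congr (eqOn_comp_rpow_one_div_mul_deriv hu hv hp f)

theorem IntervalIntegrable.comp_rpow_one_div (hp : p ≠ 0) {f : ℝ → ℝ}
    (hf : IntervalIntegrable (fun t => f t * t ^ (p - 1)) volume u v) :
    IntervalIntegrable (fun s => f (s ^ (1 / p))) volume (u ^ p) (v ^ p) := by
  rw [← intervalIntegrable_comp_rpow_mul_deriv_iff hu hv hp]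
  exact (hf.const_mul p).congr ((eqOn_comp_rpow_one_div_mul_deriv hu hv hp f).symm.mono
    uIoc_subset_uIcc)

end RpowSubstitution

theorem PConvexOn.convexOn_comp_rpow_one_div {p a b : ℝ} {F : ℝ → ℝ} (hp : p ≠ 0)
    (ha : 0 < a) (hab : a ≤ b) (hF : PConvexOn p a b F) :
    ConvexOn ℝ (uIcc (a ^ p) (b ^ p)) fun s => F (s ^ (1 / p)) := by
  refine ⟨convex_uIcc _ _, fun s hs r hr μ ν hμ hν hμν => ?_⟩
  have hroot : ∀ s ∈ uIcc (a ^ p) (b ^ p), (s ^ (1 / p)) ^ p = s := fun s hs => by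
    rw [one_div, rpow_inv_rpow (pos_of_mem_uIcc_of_pos (rpow_pos_of_pos ha p)
      (rpow_pos_of_pos (ha.trans_le hab) p) hs).le hp]
  have h := hF _ (rpow_one_div_mem_Icc hp ha hab hs) _ (rpow_one_div_mem_Icc hp ha hab hr) μ
    ⟨hμ, by linarith⟩
  rw [hroot s hs, hroot r hr, show 1 - μ = ν by linarith] at h
  simpa only [smul_eq_mul] using h

theorem PSym_rpow_one_div {p a b s : ℝ} (hp : p ≠ 0) (hs : 0 ≤ s) (f : ℝ → ℝ) :
    PSym p a b f (s ^ (1 / p)) = (f (s ^ (1 / p)) + f ((a ^ p + b ^ p - s) ^ (1 / p))) / 2 := by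
  rw [PSym, one_div, rpow_inv_rpow hs hp]

theorem PConvexOn.hermite_hadamard_pSym {p a b x y : ℝ} {f : ℝ → ℝ} (hp : p ≠ 0) (ha : 0 < a)
    (hab : a ≤ b) (hf : PConvexOn p a b (PSym p a b f))
    (hint : IntervalIntegrable (fun t => f t * t ^ (p - 1)) volume x y) (hx : x ∈ Icc a b)
    (hy : y ∈ Icc a b) (hxy : x ^ p + y ^ p = a ^ p + b ^ p) (hne : x ≠ y) :
    f (((a ^ p + b ^ p) / 2) ^ (1 / p)) ≤ p * (∫ t in x..y, f t * t ^ (p - 1)) / (y ^ p - x ^ p) ∧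
      p * (∫ t in x..y, f t * t ^ (p - 1)) / (y ^ p - x ^ p) ≤ (f x + f y) / 2 := by
  have hx0 : 0 < x := ha.trans_le hx.1
  have hy0 : 0 < y := ha.trans_le hy.1
  have hroot : ∀ t : ℝ, 0 < t → (t ^ p) ^ (1 / p) = t := fun t ht => by
    rw [one_div, rpow_rpow_inv ht.le hp]
  have hxI := (rpow_mem_uIcc_rpow_iff hp ha hab hx0).2 hx
  have hyI := (rpow_mem_uIcc_rpow_iff hp ha hab hy0).2 hy
  have hsymm : ConvexOn ℝ (uIcc (x ^ p) (y ^ p))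
      fun s => (f (s ^ (1 / p)) + f ((x ^ p + y ^ p - s) ^ (1 / p))) / 2 := by
    rw [hxy]
    exact ((hf.convexOn_comp_rpow_one_div hp ha hab).subset (uIcc_subset_uIcc hxI hyI)
      (convex_uIcc _ _)).congr fun s hs => PSym_rpow_one_div hp
        (pos_of_mem_uIcc_of_pos (rpow_pos_of_pos hx0 p) (rpow_pos_of_pos hy0 p) hs).le f
  have hne' : x ^ p ≠ y ^ p := fun h => hne (by rw [← hroot x hx0, h, hroot y hy0])
  have h := hermite_hadamard_of_convexOn_symmetrization hsymm
    (hint.comp_rpow_one_div hx0 hy0 hp) hne'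
  rwa [interval_average_eq_div, integral_comp_rpow_one_div hx0 hy0 hp, hxy, hroot x hx0,
    hroot y hy0] at h

theorem hermite_hadamard_symmetric_pair (p a b : ℝ) (hp : p ≠ 0) (ha : 0 < a)
    (hab : a < b) (f : ℝ → ℝ) (hf : PConvexOn p a b (PSym p a b f))
    (hint : IntervalIntegrable (fun t => f t * t ^ (p - 1)) volume a b)
    (x : ℝ) (hx : x ∈ Set.Icc a b) (hxne : x ^ p ≠ (a ^ p + b ^ p) / 2) :
    f (((a ^ p + b ^ p) / 2) ^ (1/p)) ≤
        (p / (a ^ p + b ^ p - 2 * x ^ p)) *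
          ∫ t in x..((a ^ p + b ^ p - x ^ p) ^ (1/p)), f t * t ^ (p - 1) ∧
    (p / (a ^ p + b ^ p - 2 * x ^ p)) *
          (∫ t in x..((a ^ p + b ^ p - x ^ p) ^ (1/p)), f t * t ^ (p - 1)) ≤
        (1/2) * (f x + f ((a ^ p + b ^ p - x ^ p) ^ (1/p))) := by
  set σ := a ^ p + b ^ p
  set y := (σ - x ^ p) ^ (1 / p) with hy_def
  have hx0 : 0 < x := ha.trans_le hx.1
  have hc : x ^ p ∈ uIcc (a ^ p) (b ^ p) := (rpow_mem_uIcc_rpow_iff hp ha hab.le hx0).2 hx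
  have hd : σ - x ^ p ∈ uIcc (a ^ p) (b ^ p) := add_sub_mem_uIcc hc
  have hy : y ∈ Icc a b := rpow_one_div_mem_Icc hp ha hab.le hd
  have hyp : y ^ p = σ - x ^ p := by
    rw [hy_def, one_div, rpow_inv_rpow (pos_of_mem_uIcc_of_pos (rpow_pos_of_pos ha p)
      (rpow_pos_of_pos (ha.trans hab) p) hd).le hp]
  have hne : x ≠ y := fun h => hxne (by linarith [h ▸ hyp])
  have hint' : IntervalIntegrable (fun t => f t * t ^ (p - 1)) volume x y :=
    hint.mono_set (uIcc_subset_uIcc (by rwa [uIcc_of_le hab.le]) (by rwa [uIcc_of_le hab.le]))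
  obtain ⟨hlower, hupper⟩ :=
    hf.hermite_hadamard_pSym hp ha hab.le hint' hx hy (by rw [hyp]; ring) hne
  have hweight : p / (σ - 2 * x ^ p) * ∫ t in x..y, f t * t ^ (p - 1) =
      p * (∫ t in x..y, f t * t ^ (p - 1)) / (y ^ p - x ^ p) := by
    rw [hyp]; ring
  rw [hweight]
  exact ⟨hlower, by linarith⟩
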